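/- arXiv:2406.01268 — 4 statements merged into one kernel-verified Lean document; each statement's English description precedes it below -/
import Mathlib

section
/- Let $\mathcal{M} \subset \mathbb{R}^p$ be a set, $x \in \mathcal{M}$, and let $\varphi_x : U_x \to T$ be the orthogonal projection (minus $x$) onto a $d$-dimensional subspace $T$ through $x$, where $U_x = B^p(x, K^{-1}) \cap \mathcal{M}$. Suppose $\varphi_x$ is invertible on its image with inverse $\varphi_x^{-1}$ twice differentiable, $\varphi_x^{-1}(0) = x$, $\nabla\varphi_x^{-1}(0)$ the inclusion of $T$, and $\|\nabla^2 \varphi_x^{-1}\| \leq K$. Then for every $z \in \bar{B}^p(x, \sqrt{3}/(2K)) \cap \mathcal{M}$, the distance from $z$ to its projection satisfies $\|z - \pi_T(z)\| \leq K \|z - x\|^2$, and consequently $\|\varphi_x(z)\|^2 \geq \|x - z\|^2 - K^2\|x-z\|^4 \geq \frac{1}{4}\|x-z\|^2$. -/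
/-!
Since `φ_x(z)` is the projection of `z - x` onto `T` and `ψ = φ_x⁻¹` has `ψ(0) = x` and
`Dψ(0)` the inclusion of `T`, Taylor's theorem for `ψ` at `0` bounds the component of `z - x`
orthogonal to `T` by `K‖φ_x(z)‖²`. By Pythagoras `‖φ_x(z)‖ ≤ ‖z - x‖`, which gives the first
estimate, and feeding it back into Pythagoras gives the lower bound for `‖φ_x(z)‖²`. The last
inequality holds because `(K‖z - x‖)² ≤ 3/4` on the ball of radius `√3/(2K)`.
-/

open Metric

section SecondOrderTaylor

variable {E F : Type*} [NormedAddCommGroup E] [NormedSpace ℝ E]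
  [NormedAddCommGroup F] [NormedSpace ℝ F]

theorem norm_sub_sub_fderiv_le_of_norm_fderiv_fderiv_le {f : E → F} {K : ℝ}
    (hf : Differentiable ℝ f) (hf' : Differentiable ℝ (fderiv ℝ f))
    (hK : ∀ y, ‖fderiv ℝ (fderiv ℝ f) y‖ ≤ K) (a b : E) :
    ‖f b - f a - fderiv ℝ f a (b - a)‖ ≤ K * ‖b - a‖ ^ 2 := by
  have hK0 : 0 ≤ K := (norm_nonneg (fderiv ℝ (fderiv ℝ f) a)).trans (hK a)
  have hlip : ∀ y, ‖fderiv ℝ f y - fderiv ℝ f a‖ ≤ K * ‖y - a‖ := fun y =>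
    convex_univ.norm_image_sub_le_of_norm_fderiv_le (fun y _ => hf' y) (fun y _ => hK y)
      trivial trivial
  have hbound : ∀ y ∈ closedBall a ‖b - a‖, ‖fderiv ℝ f y - fderiv ℝ f a‖ ≤ K * ‖b - a‖ :=
    fun y hy => (hlip y).trans (mul_le_mul_of_nonneg_left (mem_closedBall_iff_norm.1 hy) hK0)
  calc ‖f b - f a - fderiv ℝ f a (b - a)‖ ≤ K * ‖b - a‖ * ‖b - a‖ :=
        (convex_closedBall a _).norm_image_sub_le_of_norm_fderiv_le' (fun y _ => hf y) hbound
          (mem_closedBall_self (norm_nonneg _)) (mem_closedBall_iff_norm.2 le_rfl)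
    _ = K * ‖b - a‖ ^ 2 := by ring

end SecondOrderTaylor

namespace Submodule

variable {𝕜 E : Type*} [RCLike 𝕜] [NormedAddCommGroup E] [InnerProductSpace 𝕜 E]
  (S : Submodule 𝕜 E) [S.HasOrthogonalProjection]

theorem norm_sq_eq_norm_sq_starProjection_add_norm_sq_sub (v : E) :
    ‖v‖ ^ 2 = ‖S.starProjection v‖ ^ 2 + ‖v - S.starProjection v‖ ^ 2 := by
  rw [norm_sq_eq_add_norm_sq_starProjection v S, starProjection_orthogonal_val]

theorem norm_sub_starProjection_le_and_norm_sq_sub_le {v : E} {K : ℝ} (hK : 0 ≤ K)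
    (h : ‖v - S.starProjection v‖ ≤ K * ‖S.starProjection v‖ ^ 2) :
    ‖v - S.starProjection v‖ ≤ K * ‖v‖ ^ 2 ∧
      ‖v‖ ^ 2 - K ^ 2 * ‖v‖ ^ 4 ≤ ‖S.starProjection v‖ ^ 2 := by
  have hpyth := S.norm_sq_eq_norm_sq_starProjection_add_norm_sq_sub v
  have hproj : ‖S.starProjection v‖ ^ 2 ≤ ‖v‖ ^ 2 := by
    nlinarith [sq_nonneg ‖v - S.starProjection v‖]
  have hle : ‖v - S.starProjection v‖ ≤ K * ‖v‖ ^ 2 :=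
    h.trans (mul_le_mul_of_nonneg_left hproj hK)
  refine ⟨hle, ?_⟩
  have hsq : ‖v - S.starProjection v‖ ^ 2 ≤ (K * ‖v‖ ^ 2) ^ 2 :=
    pow_le_pow_left₀ (norm_nonneg _) hle 2
  nlinarith

end Submodule

theorem quarter_mul_sq_le_sq_sub_sq_mul_pow_four {K r : ℝ} (h : (K * r) ^ 2 ≤ 3 / 4) :
    1 / 4 * r ^ 2 ≤ r ^ 2 - K ^ 2 * r ^ 4 := by
  nlinarith [mul_le_mul_of_nonneg_left h (sq_nonneg r)]

theorem stmt_5_general (p : ℕ) (K : ℝ) (hK : 1 < K)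
    (M : Set (EuclideanSpace ℝ (Fin p))) (x : EuclideanSpace ℝ (Fin p))
    (T : Submodule ℝ (EuclideanSpace ℝ (Fin p)))
    (ψ : T → EuclideanSpace ℝ (Fin p))
    (hψ : ContDiff ℝ 2 ψ) (hψ0 : ψ 0 = x)
    (hψd : fderiv ℝ ψ 0 = T.subtypeL)
    (hψ2 : ∀ w : T, @norm _ ContinuousLinearMap.hasOpNorm (fderiv ℝ (fderiv ℝ ψ) w) ≤ K)
    (hinv : ∀ z ∈ Metric.ball x K⁻¹ ∩ M, ψ (Submodule.orthogonalProjectionOnto T (z - x)) = z) :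
    ∀ z ∈ Metric.closedBall x (Real.sqrt 3 / (2 * K)) ∩ M,
      ‖z - (x + (Submodule.orthogonalProjectionOnto T (z - x) : EuclideanSpace ℝ (Fin p)))‖
          ≤ K * ‖z - x‖ ^ 2 ∧
      ‖x - z‖ ^ 2 - K ^ 2 * ‖x - z‖ ^ 4
          ≤ ‖(Submodule.orthogonalProjectionOnto T (z - x) : EuclideanSpace ℝ (Fin p))‖ ^ 2 ∧
      (1/4) * ‖x - z‖ ^ 2 ≤ ‖x - z‖ ^ 2 - K ^ 2 * ‖x - z‖ ^ 4 := by
  rintro z ⟨hzx, hzM⟩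
  have hK0 : 0 < K := one_pos.trans hK
  rw [mem_closedBall_iff_norm] at hzx
  have hKz : K * ‖z - x‖ ≤ √3 / 2 :=
    calc K * ‖z - x‖ ≤ K * (√3 / (2 * K)) := mul_le_mul_of_nonneg_left hzx hK0.le
      _ = √3 / 2 := by field_simp
  have hsqrt3 : √3 < 2 := by rw [Real.sqrt_lt' two_pos]; norm_num
  have hball : ‖z - x‖ < K⁻¹ := by
    rw [← mul_one K⁻¹, lt_inv_mul_iff₀ hK0]
    linarith
  have htaylor : ‖(z - x) - T.starProjection (z - x)‖ ≤ K * ‖T.starProjection (z - x)‖ ^ 2 := by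
    have := norm_sub_sub_fderiv_le_of_norm_fderiv_fderiv_le (hψ.differentiable two_ne_zero)
      ((hψ.fderiv_right le_rfl).differentiable one_ne_zero) hψ2 0
      (T.orthogonalProjectionOnto (z - x))
    simpa only [hinv z ⟨mem_ball_iff_norm.2 hball, hzM⟩, hψ0, hψd, sub_zero,
      Submodule.subtypeL_apply, Submodule.coe_norm, Submodule.starProjection_apply] using this
  obtain ⟨hperp, hproj⟩ := T.norm_sub_starProjection_le_and_norm_sq_sub_le hK0.le htaylor
  rw [norm_sub_rev x z, ← sub_sub]
  refine ⟨hperp, hproj, quarter_mul_sq_le_sq_sub_sq_mul_pow_four ?_⟩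
  calc (K * ‖z - x‖) ^ 2 ≤ (√3 / 2) ^ 2 := pow_le_pow_left₀ (by positivity) hKz 2
    _ = 3 / 4 := by rw [div_pow, Real.sq_sqrt zero_le_three]; norm_num

/-- For a chart `φ_x = π_T - x` of a submanifold `M` whose inverse `ψ` is twice
differentiable with `ψ(0) = x`, `∇ψ(0)` the inclusion of `T`, and `‖∇²ψ‖ ≤ K`:
every `z ∈ B̄(x, √3/(2K)) ∩ M` satisfies `‖z - π_T(z)‖ ≤ K‖z-x‖²`, and consequently
`‖φ_x(z)‖² ≥ ‖x-z‖² - K²‖x-z‖⁴ ≥ ¼‖x-z‖²`. -/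
theorem stmt_5 (p : ℕ) (K : ℝ) (hK : 1 < K)
    (M : Set (EuclideanSpace ℝ (Fin p))) (x : EuclideanSpace ℝ (Fin p)) (hx : x ∈ M)
    (T : Submodule ℝ (EuclideanSpace ℝ (Fin p)))
    (ψ : T → EuclideanSpace ℝ (Fin p))
    (hψ : ContDiff ℝ 2 ψ) (hψ0 : ψ 0 = x)
    (hψd : fderiv ℝ ψ 0 = T.subtypeL)
    (hψ2 : ∀ w : T, @norm _ ContinuousLinearMap.hasOpNorm (fderiv ℝ (fderiv ℝ ψ) w) ≤ K)
    (hinv : ∀ z ∈ Metric.ball x K⁻¹ ∩ M, ψ (Submodule.orthogonalProjectionOnto T (z - x)) = z) :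
    ∀ z ∈ Metric.closedBall x (Real.sqrt 3 / (2 * K)) ∩ M,
      ‖z - (x + (Submodule.orthogonalProjectionOnto T (z - x) : EuclideanSpace ℝ (Fin p)))‖
          ≤ K * ‖z - x‖ ^ 2 ∧
      ‖x - z‖ ^ 2 - K ^ 2 * ‖x - z‖ ^ 4
          ≤ ‖(Submodule.orthogonalProjectionOnto T (z - x) : EuclideanSpace ℝ (Fin p))‖ ^ 2 ∧
      (1/4) * ‖x - z‖ ^ 2 ≤ ‖x - z‖ ^ 2 - K ^ 2 * ‖x - z‖ ^ 4 :=
  stmt_5_general p K hK M x T ψ hψ hψ0 hψd hψ2 hinv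
end

section
/- Let $X : B \to \mathbb{R}^p$ (with $B \subset \mathbb{R}^d$ convex) be differentiable with $\|\nabla X\| \leq K_X$ on $B$, and for $\xi > 0$ define $L(u) = \frac{X(u)}{\xi}$ if $\|X(u)\| < \xi$ and $L(u) = \frac{X(u)}{\|X(u)\|}$ if $\|X(u)\| \geq \xi$. Fix $s \in (0,1]$ and write $\delta_u = \|X(u)\|$. Then for all $u, v \in B$, $\|L(u) - L(v)\| \leq 8 K_X \min(\delta_u, \delta_v)^{-(1-s)} \|u - v\|^{1-s}$, where we interpret the right-hand side as $+\infty$ if $\min(\delta_u,\delta_v) = 0$. -/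
/-!
Write `L = N ∘ X` with `N x = (max ξ ‖x‖)⁻¹ • x`. The map `N` takes values in the unit ball and
satisfies `‖N x - N y‖ · min ‖x‖ ‖y‖ ≤ 2 ‖x - y‖`, while the mean value inequality makes `X`
`K_X`-Lipschitz on the convex set `B`. Hence, with `m = min(δ_u, δ_v)` and `r = K_X ‖u - v‖ / m`,
`‖L u - L v‖ ≤ 2 min(1, r) ≤ 2 r^(1-s)`, and `K_X^(1-s) ≤ K_X` because `K_X ≥ 1`.
-/

open Real

section TruncNormalize

variable {E : Type*} [NormedAddCommGroup E] [NormedSpace ℝ E]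

noncomputable def truncNormalize (ξ : ℝ) (x : E) : E := (max ξ ‖x‖)⁻¹ • x

lemma truncNormalize_eq_ite (ξ : ℝ) (x : E) :
    truncNormalize ξ x = if ‖x‖ < ξ then ξ⁻¹ • x else ‖x‖⁻¹ • x := by
  split_ifs with h
  · rw [truncNormalize, max_eq_left h.le]
  · rw [truncNormalize, max_eq_right (not_lt.mp h)]

lemma norm_truncNormalize_le_one {ξ : ℝ} (hξ : 0 < ξ) (x : E) : ‖truncNormalize ξ x‖ ≤ 1 := by
  have hpos : 0 < max ξ ‖x‖ := hξ.trans_le (le_max_left _ _)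
  rw [truncNormalize, norm_smul, norm_inv, norm_of_nonneg hpos.le, inv_mul_le_iff₀ hpos, mul_one]
  exact le_max_right _ _

lemma norm_inv_smul_sub_inv_smul_le {a b : ℝ} {x y : E} (ha : 0 < a) (hab : a ≤ b)
    (hy : ‖y‖ ≤ b) (hba : b - a ≤ ‖x - y‖) :
    ‖a⁻¹ • x - b⁻¹ • y‖ ≤ 2 * ‖x - y‖ / a := by
  have hb : 0 < b := ha.trans_le hab
  have hcoef : 0 ≤ a⁻¹ - b⁻¹ := sub_nonneg.mpr (inv_anti₀ ha hab)
  have hsecond : (a⁻¹ - b⁻¹) * ‖y‖ ≤ ‖x - y‖ / a :=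
    calc (a⁻¹ - b⁻¹) * ‖y‖ ≤ (a⁻¹ - b⁻¹) * b := mul_le_mul_of_nonneg_left hy hcoef
      _ = (b - a) / a := by field_simp
      _ ≤ ‖x - y‖ / a := by gcongr
  calc ‖a⁻¹ • x - b⁻¹ • y‖ = ‖a⁻¹ • (x - y) + (a⁻¹ - b⁻¹) • y‖ := by
        rw [smul_sub, sub_smul]; abel_nf
    _ ≤ a⁻¹ * ‖x - y‖ + (a⁻¹ - b⁻¹) * ‖y‖ := by
        refine (norm_add_le _ _).trans (le_of_eq ?_)
        rw [norm_smul, norm_smul, norm_of_nonneg (inv_pos.mpr ha).le, norm_of_nonneg hcoef]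
    _ ≤ ‖x - y‖ / a + ‖x - y‖ / a := by rw [inv_mul_eq_div]; gcongr
    _ = 2 * ‖x - y‖ / a := by ring

lemma norm_truncNormalize_sub_mul_min_le {ξ : ℝ} (hξ : 0 < ξ) (x y : E) :
    ‖truncNormalize ξ x - truncNormalize ξ y‖ * min ‖x‖ ‖y‖ ≤ 2 * ‖x - y‖ := by
  wlog hxy : max ξ ‖x‖ ≤ max ξ ‖y‖ generalizing x y
  · rw [norm_sub_rev, min_comm, norm_sub_rev x]
    exact this y x (le_of_not_ge hxy)
  have ha : 0 < max ξ ‖x‖ := hξ.trans_le (le_max_left _ _)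
  have hba : max ξ ‖y‖ - max ξ ‖x‖ ≤ ‖x - y‖ :=
    calc max ξ ‖y‖ - max ξ ‖x‖ ≤ |max ‖y‖ ξ - max ‖x‖ ξ| := by
          rw [max_comm ξ, max_comm ξ]; exact le_abs_self _
      _ ≤ |‖y‖ - ‖x‖| := abs_max_sub_max_le_abs _ _ _
      _ ≤ ‖x - y‖ := by rw [norm_sub_rev x]; exact abs_norm_sub_norm_le _ _
  have hbound := norm_inv_smul_sub_inv_smul_le ha hxy (le_max_right _ _) hba
  calc ‖truncNormalize ξ x - truncNormalize ξ y‖ * min ‖x‖ ‖y‖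
      ≤ ‖truncNormalize ξ x - truncNormalize ξ y‖ * max ξ ‖x‖ := by
        gcongr; exact (min_le_left _ _).trans (le_max_right _ _)
    _ ≤ 2 * ‖x - y‖ := (le_div_iff₀ ha).mp hbound

end TruncNormalize

lemma min_one_le_rpow {r t : ℝ} (hr : 0 ≤ r) (ht0 : 0 ≤ t) (ht1 : t ≤ 1) : min 1 r ≤ r ^ t := by
  rcases le_total r 1 with hr1 | hr1
  · exact (min_le_right _ _).trans (self_le_rpow_of_le_one hr hr1 ht1)
  · exact (min_le_left _ _).trans (one_le_rpow hr1 ht0)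

lemma le_mul_rpow_of_le_two_of_mul_le {a K m c t : ℝ} (hK : 1 ≤ K) (hm : 0 < m) (hc : 0 ≤ c)
    (ht0 : 0 ≤ t) (ht1 : t ≤ 1) (hbdd : a ≤ 2) (hlip : a * m ≤ 2 * (K * c)) :
    a ≤ 2 * K * m ^ (-t) * c ^ t := by
  have hKc : 0 ≤ K * c := mul_nonneg (zero_le_one.trans hK) hc
  have hmin : a / 2 ≤ min 1 (K * c / m) :=
    le_min (by linarith) (by rw [le_div_iff₀ hm]; linarith)
  calc a ≤ 2 * (K * c / m) ^ t := by
        linarith [min_one_le_rpow (div_nonneg hKc hm.le) ht0 ht1]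
    _ = 2 * K ^ t * m ^ (-t) * c ^ t := by
        rw [div_rpow hKc hm.le, mul_rpow (zero_le_one.trans hK) hc, rpow_neg hm.le]; ring
    _ ≤ 2 * K * m ^ (-t) * c ^ t := by gcongr; exact rpow_le_self_of_one_le hK ht1

/-- Hölder regularity of the truncated normalization `L` of a vector field `X` with
`‖∇X‖ ≤ K_X` on a convex set `B`: for `s ∈ (0,1]` and `u, v ∈ B` with
`min(‖X u‖, ‖X v‖) > 0`,
`‖L u - L v‖ ≤ 8 K_X min(‖X u‖,‖X v‖)^{-(1-s)} ‖u-v‖^{1-s}`. -/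
theorem stmt_9 (d p : ℕ) (KX ξ s : ℝ) (hKX : 1 ≤ KX) (hξ : 0 < ξ)
    (hs : 0 < s) (hs1 : s ≤ 1)
    (B : Set (EuclideanSpace ℝ (Fin d))) (hB : Convex ℝ B)
    (X : EuclideanSpace ℝ (Fin d) → EuclideanSpace ℝ (Fin p))
    (hX : DifferentiableOn ℝ X B)
    (hX' : ∀ u ∈ B, ‖fderivWithin ℝ X B u‖ ≤ KX)
    (L : EuclideanSpace ℝ (Fin d) → EuclideanSpace ℝ (Fin p))
    (hL : ∀ u, L u = if ‖X u‖ < ξ then ξ⁻¹ • X u else ‖X u‖⁻¹ • X u) :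
    ∀ u ∈ B, ∀ v ∈ B, 0 < min ‖X u‖ ‖X v‖ →
      ‖L u - L v‖ ≤ 8 * KX * (min ‖X u‖ ‖X v‖) ^ (-(1 - s)) * ‖u - v‖ ^ (1 - s) := by
  intro u hu v hv hm
  have hLX : ∀ w, L w = truncNormalize ξ (X w) := fun w => by rw [hL, truncNormalize_eq_ite]
  have hbdd : ‖L u - L v‖ ≤ 2 := by
    rw [hLX, hLX]
    linarith [norm_sub_le (truncNormalize ξ (X u)) (truncNormalize ξ (X v)),
      norm_truncNormalize_le_one hξ (X u), norm_truncNormalize_le_one hξ (X v)]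
  have hlip : ‖L u - L v‖ * min ‖X u‖ ‖X v‖ ≤ 2 * (KX * ‖u - v‖) := by
    rw [hLX, hLX]
    exact (norm_truncNormalize_sub_mul_min_le hξ _ _).trans
      (by gcongr; exact hB.norm_image_sub_le_of_norm_fderivWithin_le hX hX' hv hu)
  calc ‖L u - L v‖
      ≤ 2 * KX * (min ‖X u‖ ‖X v‖) ^ (-(1 - s)) * ‖u - v‖ ^ (1 - s) :=
        le_mul_rpow_of_le_two_of_mul_le hKX hm (norm_nonneg _) (by linarith) (by linarith)
          hbdd hlip
    _ ≤ 8 * KX * (min ‖X u‖ ‖X v‖) ^ (-(1 - s)) * ‖u - v‖ ^ (1 - s) := by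
        gcongr; norm_num
end

section
/- Let $\beta > 0$, $0 < \gamma \leq \alpha$, and let $(a_{j})_{j \geq 0}$, $(b_j)_{j\geq 0}$ be sequences of nonnegative reals with $b_j \leq C 2^{-j\beta}(1+j)^{-2}$ for all $j$. Set $S_\gamma = \sum_j 2^{-j\gamma} a_j b_j$ and $S_\alpha = \sum_j 2^{-j\alpha} a_j b_j$ (assumed finite), with $a_j \leq 1$. Then $S_\gamma \leq C' S_\alpha^{\frac{\beta+\gamma}{\beta+\alpha}}$, where $C'$ depends only on $C, \beta, \gamma, \alpha$. -/
/-!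
Write `θ = (β + γ) / (β + α)`, so that `-γ = -αθ + β(1 - θ)`. Each term then factors as
`2^{-jγ} a_j b_j = (2^{-jα} a_j b_j)^θ (2^{jβ} a_j b_j)^{1-θ}`, and the decay of `b_j`
(together with `a_j ≤ 1`) bounds the second factor by `C (1 + j)^{-2}`, a summable sequence.
Hölder's inequality with exponents `1/θ` and `1/(1-θ)` gives the claim with
`C' = (∑ C (1 + j)^{-2})^{1-θ}`.
-/

open Real

lemma Real.summable_and_tsum_rpow_mul_rpow_le {ι : Type*} {u v : ι → ℝ} {θ : ℝ}
    (hθ₀ : 0 < θ) (hθ₁ : θ ≤ 1) (hu : ∀ i, 0 ≤ u i) (hv : ∀ i, 0 ≤ v i)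
    (hu_sum : Summable u) (hv_sum : Summable v) :
    (Summable fun i => u i ^ θ * v i ^ (1 - θ)) ∧
      ∑' i, u i ^ θ * v i ^ (1 - θ) ≤ (∑' i, u i) ^ θ * (∑' i, v i) ^ (1 - θ) := by
  rcases hθ₁.eq_or_lt with rfl | hθ₁
  · simpa using hu_sum
  have hθ₁' : 0 < 1 - θ := sub_pos.2 hθ₁
  have hpq := holderConjugate_one_div hθ₀ hθ₁' (add_sub_cancel θ 1)
  have cancel : ∀ {x r : ℝ}, 0 ≤ x → 0 < r → (x ^ r) ^ (1 / r) = x := fun hx hr => by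
    rw [← rpow_mul hx, mul_one_div_cancel hr.ne', rpow_one]
  have H := summable_and_inner_le_Lp_mul_Lq_tsum_of_nonneg hpq
    (f := fun i => u i ^ θ) (g := fun i => v i ^ (1 - θ))
    (fun i => rpow_nonneg (hu i) _) (fun i => rpow_nonneg (hv i) _)
    (by simpa only [cancel (hu _) hθ₀] using hu_sum)
    (by simpa only [cancel (hv _) hθ₁'] using hv_sum)
  simpa only [cancel (hu _) hθ₀, cancel (hv _) hθ₁', one_div_one_div] using H

lemma Real.rpow_mul_le_rpow_mul_rpow {x t c r s e θ : ℝ} (hx : 0 < x) (ht : 0 ≤ t)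
    (hθ₁ : θ ≤ 1) (htc : x ^ s * t ≤ c) (he : r * θ + s * (1 - θ) = e) :
    x ^ e * t ≤ (x ^ r * t) ^ θ * c ^ (1 - θ) := by
  have hsplit : x ^ e * t = (x ^ r * t) ^ θ * (x ^ s * t) ^ (1 - θ) := by
    rw [mul_rpow (rpow_nonneg hx.le _) ht, mul_rpow (rpow_nonneg hx.le _) ht,
      ← rpow_mul hx.le, ← rpow_mul hx.le, mul_mul_mul_comm, ← rpow_add hx,
      ← rpow_add' ht (by norm_num), add_sub_cancel, rpow_one, he]
  rw [hsplit]
  gcongr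

lemma summable_inv_one_add_sq : Summable fun j : ℕ => ((1 + (j : ℝ)) ^ 2)⁻¹ :=
  ((summable_nat_add_iff 1).2 (summable_nat_pow_inv.2 one_lt_two)).congr fun j => by
    push_cast; ring_nf

/-- Sequence-space core of the interpolation of Besov IPMs: if `0 ≤ a j ≤ 1` and
`0 ≤ b j ≤ C 2^{-jβ}(1+j)^{-2}`, then
`∑ 2^{-jγ} a_j b_j ≤ C' (∑ 2^{-jα} a_j b_j)^{(β+γ)/(β+α)}`
for a constant `C'` depending only on `C, β, γ, α`. -/
theorem stmt_11 (C β γ α : ℝ) (hC : 0 < C) (hβ : 0 < β) (hγ : 0 < γ) (hγα : γ ≤ α) :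
    ∃ C' : ℝ, 0 < C' ∧ ∀ a b : ℕ → ℝ,
      (∀ j, 0 ≤ a j) → (∀ j, a j ≤ 1) → (∀ j, 0 ≤ b j) →
      (∀ j, b j ≤ C * 2 ^ (-(j:ℝ) * β) * ((1 + (j:ℝ)) ^ 2)⁻¹) →
      Summable (fun j : ℕ => (2:ℝ) ^ (-(j:ℝ) * γ) * a j * b j) →
      Summable (fun j : ℕ => (2:ℝ) ^ (-(j:ℝ) * α) * a j * b j) →
      ∑' j : ℕ, (2:ℝ) ^ (-(j:ℝ) * γ) * a j * b j ≤
        C' * (∑' j : ℕ, (2:ℝ) ^ (-(j:ℝ) * α) * a j * b j) ^ ((β + γ) / (β + α)) := by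
  set θ := (β + γ) / (β + α)
  have hβα : 0 < β + α := by linarith
  have hθ₀ : 0 < θ := div_pos (by linarith) hβα
  have hθ₁ : θ ≤ 1 := (div_le_one hβα).2 (by linarith)
  have hθ : ∀ j : ℝ, -j * α * θ + j * β * (1 - θ) = -j * γ := fun j => by
    simp only [θ]; field_simp; ring
  set w := fun j : ℕ => C * ((1 + (j : ℝ)) ^ 2)⁻¹
  have hw : ∀ j, 0 ≤ w j := fun j => by positivity
  have hw_sum : Summable w := summable_inv_one_add_sq.mul_left C
  have hK : 0 < ∑' j, w j := hw_sum.tsum_pos hw 0 (by simp [w, hC])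
  refine ⟨(∑' j, w j) ^ (1 - θ), by positivity, fun a b ha₀ ha₁ hb₀ hb hsγ hsα => ?_⟩
  have hterm : ∀ j : ℕ, (2:ℝ) ^ (-(j:ℝ) * γ) * a j * b j ≤
      ((2:ℝ) ^ (-(j:ℝ) * α) * a j * b j) ^ θ * w j ^ (1 - θ) := fun j => by
    simp only [mul_assoc]
    refine rpow_mul_le_rpow_mul_rpow two_pos (mul_nonneg (ha₀ j) (hb₀ j)) hθ₁ ?_ (hθ j)
    calc (2:ℝ) ^ ((j:ℝ) * β) * (a j * b j)
        ≤ 2 ^ ((j:ℝ) * β) * (1 * (C * 2 ^ (-(j:ℝ) * β) * ((1 + (j:ℝ)) ^ 2)⁻¹)) := by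
          gcongr
          exacts [hb₀ j, ha₁ j, hb j]
      _ = C * (2 ^ ((j:ℝ) * β) * 2 ^ (-(j:ℝ) * β)) * ((1 + (j:ℝ)) ^ 2)⁻¹ := by ring
      _ = w j := by simp [w, ← rpow_add two_pos]
  have hterm₀ : ∀ j : ℕ, 0 ≤ (2:ℝ) ^ (-(j:ℝ) * α) * a j * b j := fun j => by
    have := ha₀ j; have := hb₀ j; positivity
  obtain ⟨hsum, hle⟩ := summable_and_tsum_rpow_mul_rpow_le hθ₀ hθ₁ hterm₀ hw hsα hw_sum
  calc _ ≤ _ := hsγ.tsum_le_tsum hterm hsum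
    _ ≤ _ := hle
    _ = _ := mul_comm _ _
end

section
/- Let $\mu$ be a probability measure on a $d$-dimensional compact submanifold $\mathcal{M} \subset \mathbb{R}^p$ with density $f_\mu \geq K^{-1}$ with respect to the volume (d-dimensional Hausdorff) measure, and suppose for every $x \in \mathcal{M}$ and $s \in (0, s_0)$ the volume lower bound $\lambda_{\mathcal{M}}(\mathcal{M}\cap B^p(x,s)) \geq c s^d$ holds. Let $\mu^\star$ be another probability measure with support $\mathcal{M}^\star$ and suppose $W_1(\mu,\mu^\star) \leq \frac{c}{2K} \delta^{d+1}$ for some $\delta \in (0, s_0)$. Then every point $x \in \mathcal{M}$ satisfies $d(x, \mathcal{M}^\star) < \delta$, i.e. $\sup_{x \in \mathcal{M}} d(x, \mathcal{M}^\star) < \delta$. -/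
/-!
If a point `x ∈ M` were at distance `≥ δ` from `M⋆`, the 1-Lipschitz tent `y ↦ (δ - ‖y - x‖)⁺`
would integrate to `0` against `μ⋆`, whereas against `μ` it exceeds `δ/2` times the mass of the
ball `B(x, δ/2)`, which the density and volume lower bounds make at least `c (δ/2)^d / K`. By
Kantorovich duality this gap is at most `W₁(μ, μ⋆)`, a contradiction.
-/

open MeasureTheory Metric
open scoped ENNReal

section Tent

variable {X : Type*} [PseudoMetricSpace X]

noncomputable def tent (x : X) (δ : ℝ) (y : X) : ℝ := max (δ - dist y x) 0

theorem lipschitzWith_tent (x : X) (δ : ℝ) : LipschitzWith 1 (tent x δ) := by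
  show LipschitzWith 1 fun y => max (δ - dist y x) 0
  simpa using ((LipschitzWith.const δ).sub (LipschitzWith.dist_left x)).max_const 0

theorem tent_nonneg (x : X) (δ : ℝ) (y : X) : 0 ≤ tent x δ y := le_max_right _ _

theorem tent_le {δ : ℝ} (hδ : 0 ≤ δ) (x y : X) : tent x δ y ≤ δ :=
  max_le (by linarith [dist_nonneg (x := y) (y := x)]) hδ

theorem tent_eq_zero_of_le_infDist {x y : X} {δ : ℝ} {S : Set X} (h : δ ≤ infDist x S)
    (hy : y ∈ S) : tent x δ y = 0 := by
  have : δ ≤ dist y x := dist_comm x y ▸ h.trans (infDist_le_dist_of_mem hy)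
  exact max_eq_right (by linarith)

theorem half_lt_tent_of_mem_ball {x y : X} {δ : ℝ} (hy : y ∈ ball x (δ / 2)) :
    δ / 2 < tent x δ y := by
  have := mem_ball.mp hy
  exact lt_max_of_lt_left (by linarith)

variable [MeasurableSpace X]

theorem integral_tent_eq_zero_of_le_infDist {ν : Measure X} {x : X} {δ : ℝ} {S : Set X}
    (hS : ν Sᶜ = 0) (h : δ ≤ infDist x S) : ∫ y, tent x δ y ∂ν = 0 :=
  integral_eq_zero_of_ae <| measure_mono_null
    (fun _ hy hyS => hy (tent_eq_zero_of_le_infDist h hyS)) hS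

variable [OpensMeasurableSpace X]

theorem integrable_tent (μ : Measure X) [IsFiniteMeasure μ] (x : X) {δ : ℝ} (hδ : 0 ≤ δ) :
    Integrable (tent x δ) μ :=
  Integrable.of_bound (lipschitzWith_tent x δ).continuous.aestronglyMeasurable δ
    (ae_of_all _ fun y => by
      rw [Real.norm_of_nonneg (tent_nonneg x δ y)]
      exact tent_le hδ x y)

theorem half_mul_measureReal_ball_lt_integral_tent (μ : Measure X) [IsFiniteMeasure μ]
    (x : X) {δ : ℝ} (hδ : 0 < δ) (hB : μ (ball x (δ / 2)) ≠ 0) :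
    δ / 2 * μ.real (ball x (δ / 2)) < ∫ y, tent x δ y ∂μ := by
  set B := ball x (δ / 2)
  have hint := integrable_tent μ x hδ.le
  have hgap : 0 < ∫ y in B, (tent x δ y - δ / 2) ∂μ := by
    rw [setIntegral_pos_iff_support_of_nonneg_ae
      (ae_restrict_of_forall_mem measurableSet_ball fun y hy => (sub_pos.2
        (half_lt_tent_of_mem_ball hy)).le) (hint.sub (integrable_const _)).integrableOn]
    refine (pos_iff_ne_zero.2 hB).trans_le (measure_mono fun y hy => ⟨?_, hy⟩)
    exact (sub_pos.2 (half_lt_tent_of_mem_ball hy)).ne'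
  calc δ / 2 * μ.real B
      < ∫ y in B, (tent x δ y - δ / 2) ∂μ + δ / 2 * μ.real B := by linarith
    _ = ∫ y in B, tent x δ y ∂μ := by
      rw [integral_sub hint.integrableOn (integrable_const _), setIntegral_const, smul_eq_mul,
        mul_comm]
      ring
    _ ≤ ∫ y, tent x δ y ∂μ := setIntegral_le_integral hint (ae_of_all _ (tent_nonneg x δ))

end Tent

theorem mul_measure_inter_le_withDensity_restrict {α : Type*} [MeasurableSpace α]
    {ν : Measure α} {M s : Set α} {f : α → ℝ≥0∞} {a : ℝ≥0∞} (hM : MeasurableSet M)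
    (hs : MeasurableSet s) (hf : ∀ x ∈ M, a ≤ f x) :
    a * ν (s ∩ M) ≤ (ν.restrict M).withDensity f s := by
  rw [withDensity_apply _ hs, Measure.restrict_restrict hs, ← setLIntegral_const]
  exact setLIntegral_mono' (hs.inter hM) fun y hy => hf y hy.2

theorem stmt_19_general (p d : ℕ) (K c s₀ δ : ℝ) (hK : 0 < K) (hc : 0 < c)
    (hδ : 0 < δ) (hδs : δ < s₀)
    (M Mstar : Set (EuclideanSpace ℝ (Fin p))) (hM : IsCompact M)
    (μ μstar : Measure (EuclideanSpace ℝ (Fin p)))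
    [IsProbabilityMeasure μ]
    (f : EuclideanSpace ℝ (Fin p) → ℝ≥0∞)
    (hμ : μ = ((Measure.hausdorffMeasure (d : ℝ)).restrict M).withDensity f)
    (hf : ∀ x ∈ M, ENNReal.ofReal K⁻¹ ≤ f x)
    (hvol : ∀ x ∈ M, ∀ s : ℝ, 0 < s → s < s₀ →
      ENNReal.ofReal (c * s ^ d) ≤
        Measure.hausdorffMeasure (d : ℝ) (M ∩ Metric.ball x s))
    (hμstar : μstar Mstarᶜ = 0)
    (hW : ∀ D : EuclideanSpace ℝ (Fin p) → ℝ, LipschitzWith 1 D →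
      ∫ x, D x ∂μ - ∫ x, D x ∂μstar ≤ c / (2 ^ (d + 1) * K) * δ ^ (d + 1)) :
    ∀ x ∈ M, Metric.infDist x Mstar < δ := by
  intro x hx
  by_contra! hfar
  have hmass : ENNReal.ofReal (K⁻¹ * (c * (δ / 2) ^ d)) ≤ μ (ball x (δ / 2)) := by
    rw [hμ, ENNReal.ofReal_mul (by positivity)]
    refine le_trans ?_ (mul_measure_inter_le_withDensity_restrict hM.isClosed.measurableSet
      measurableSet_ball hf)
    rw [Set.inter_comm]
    gcongr
    exact hvol x hx _ (by positivity) (by linarith)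
  have hmass_real : K⁻¹ * (c * (δ / 2) ^ d) ≤ μ.real (ball x (δ / 2)) :=
    (ENNReal.ofReal_le_iff_le_toReal (measure_ne_top _ _)).mp hmass
  have hball : μ (ball x (δ / 2)) ≠ 0 :=
    ((ENNReal.ofReal_pos.2 (by positivity)).trans_le hmass).ne'
  have hdual := hW _ (lipschitzWith_tent x δ)
  rw [integral_tent_eq_zero_of_le_infDist hμstar hfar, sub_zero] at hdual
  have hbound : c / (2 ^ (d + 1) * K) * δ ^ (d + 1) = δ / 2 * (K⁻¹ * (c * (δ / 2) ^ d)) := by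
    rw [div_pow]
    field_simp
    ring
  have := half_mul_measureReal_ball_lt_integral_tent μ x hδ hball
  nlinarith

/-- If `μ` has density `≥ K⁻¹` with respect to the `d`-dimensional Hausdorff (volume)
measure on `M`, which satisfies the volume lower bound `λ_M(M ∩ B(x,s)) ≥ c s^d`, and
`W₁(μ, μ⋆) ≤ c/(2^{d+1} K) δ^{d+1}` (expressed through Kantorovich duality), then every
point of `M` is within distance `δ` of the support `M⋆` of `μ⋆`. -/
theorem stmt_19 (p d : ℕ) (K c s₀ δ : ℝ) (hK : 0 < K) (hc : 0 < c) (hs₀ : 0 < s₀)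
    (hδ : 0 < δ) (hδs : δ < s₀)
    (M Mstar : Set (EuclideanSpace ℝ (Fin p))) (hM : IsCompact M)
    (μ μstar : Measure (EuclideanSpace ℝ (Fin p)))
    [IsProbabilityMeasure μ] [IsProbabilityMeasure μstar]
    (f : EuclideanSpace ℝ (Fin p) → ℝ≥0∞)
    (hμ : μ = ((Measure.hausdorffMeasure (d : ℝ)).restrict M).withDensity f)
    (hf : ∀ x ∈ M, ENNReal.ofReal K⁻¹ ≤ f x)
    (hvol : ∀ x ∈ M, ∀ s : ℝ, 0 < s → s < s₀ →
      ENNReal.ofReal (c * s ^ d) ≤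
        Measure.hausdorffMeasure (d : ℝ) (M ∩ Metric.ball x s))
    (hμstar : μstar Mstarᶜ = 0)
    (hW : ∀ D : EuclideanSpace ℝ (Fin p) → ℝ, LipschitzWith 1 D →
      ∫ x, D x ∂μ - ∫ x, D x ∂μstar ≤ c / (2 ^ (d + 1) * K) * δ ^ (d + 1)) :
    ∀ x ∈ M, Metric.infDist x Mstar < δ :=
  stmt_19_general p d K c s₀ δ hK hc hδ hδs M Mstar hM μ μstar f hμ hf hvol hμstar hW
end
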